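/- arXiv:1602.05007 — 4 statements merged into one kernel-verified Lean document; each statement's English description precedes it below -/
import Mathlib

section
/- Let f : [0, T) → ℝ be a C¹ positive function satisfying f'(t) ≥ (γ - λ² + f(t)^α) f(t) for all t, where α > 0, λ > 0, γ ∈ ℝ. If f(0)^α > λ² - γ, then T < ∞ (the differential inequality cannot hold on an infinite interval). -/
/-- Kaplan's ODE lemma: a C¹ positive function on `[0, ∞)` satisfying
`f' ≥ (γ - λ² + f^α) f` with `f(0)^α > λ² - γ` cannot exist globally;
i.e. the differential inequality can only hold on a finite time interval. -/
theorem stmt_0 (α lam γ : ℝ) (hα : 0 < α) (hlam : 0 < lam)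
    (f : ℝ → ℝ)
    (hpos : ∀ t, 0 ≤ t → 0 < f t)
    (hdiff : ∀ t, 0 ≤ t → HasDerivAt f (deriv f t) t)
    (hcont : ContinuousOn (deriv f) (Set.Ici 0))
    (hineq : ∀ t, 0 ≤ t → (γ - lam ^ 2 + f t ^ α) * f t ≤ deriv f t)
    (h0 : lam ^ 2 - γ < f 0 ^ α) : False := by
  -- ν : positive constant with lam² - γ ≤ ν and ν < f 0 ^ α
  set ν : ℝ := max (lam ^ 2 - γ) (f 0 ^ α / 2) with hν_def
  have hf0pow : 0 < f 0 ^ α := Real.rpow_pos_of_pos (hpos 0 le_rfl) α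
  have hν0 : 0 < ν := lt_max_of_lt_right (by linarith)
  have hνlt : ν < f 0 ^ α := max_lt h0 (by linarith)
  have hμν : lam ^ 2 - γ ≤ ν := le_max_left _ _
  -- the auxiliary function p
  set p : ℝ → ℝ := fun t => (f t ^ (-α) - 1 / ν) * Real.exp (-(α * ν) * t) with hp_def
  -- derivative of p
  have hp : ∀ t, 0 ≤ t → HasDerivAt p
      ((deriv f t * (-α) * f t ^ (-α - 1)) * Real.exp (-(α * ν) * t)
        + (f t ^ (-α) - 1 / ν) * (Real.exp (-(α * ν) * t) * (-(α * ν)))) t := by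
    intro t ht
    have hg : HasDerivAt (fun s => f s ^ (-α)) (deriv f t * (-α) * f t ^ (-α - 1)) t :=
      (hdiff t ht).rpow_const (Or.inl (ne_of_gt (hpos t ht)))
    have hlin : HasDerivAt (fun s : ℝ => -(α * ν) * s) (-(α * ν)) t := by
      simpa using (hasDerivAt_id t).const_mul (-(α * ν))
    have he : HasDerivAt (fun s : ℝ => Real.exp (-(α * ν) * s))
        (Real.exp (-(α * ν) * t) * (-(α * ν))) t := hlin.exp
    exact (hg.sub_const (1 / ν)).mul he
  -- derivative of p is nonpositive on (0, ∞)
  have hderiv_nonpos : ∀ t, 0 ≤ t → deriv p t ≤ 0 := by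
    intro t ht
    rw [(hp t ht).deriv]
    have hft : 0 < f t := hpos t ht
    have hE : 0 < Real.exp (-(α * ν) * t) := Real.exp_pos _
    have key : deriv f t * (-α) * f t ^ (-α - 1)
        + (f t ^ (-α) - 1 / ν) * (-(α * ν)) ≤ 0 := by
      have h1 : f t ^ (-α - 1) * f t = f t ^ (-α) := by
        have h := Real.rpow_add hft (-α - 1) 1
        rw [Real.rpow_one] at h
        rw [← h]; congr 1; ring
      have h2 : f t ^ (-α) * f t ^ α = 1 := by
        rw [← Real.rpow_add hft]; simp
      have h3 : 0 < f t ^ (-α - 1) := Real.rpow_pos_of_pos hft _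
      have h4 : 0 < f t ^ (-α) := Real.rpow_pos_of_pos hft _
      have hf' := hineq t ht
      -- -α f^(-α-1) f' ≤ -α f^(-α-1) (γ - λ² + f^α) f
      have h5 : deriv f t * (-α) * f t ^ (-α - 1)
          ≤ ((γ - lam ^ 2 + f t ^ α) * f t) * (-α) * f t ^ (-α - 1) := by
        nlinarith [mul_pos h3 hα]
      have h6 : ((γ - lam ^ 2 + f t ^ α) * f t) * (-α) * f t ^ (-α - 1)
          = -α * ((γ - lam ^ 2) * f t ^ (-α) + 1) := by
        linear_combination (-α) * ((γ - lam ^ 2 + f t ^ α) * h1 + h2)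
      have h7 : -α * ((γ - lam ^ 2) * f t ^ (-α) + 1)
          ≤ -α + α * ν * f t ^ (-α) := by
        have : (lam ^ 2 - γ) * f t ^ (-α) ≤ ν * f t ^ (-α) :=
          mul_le_mul_of_nonneg_right hμν h4.le
        nlinarith
      have h8 : -α + α * ν * f t ^ (-α) + (f t ^ (-α) - 1 / ν) * (-(α * ν)) ≤ 0 := by
        have hne : ν ≠ 0 := ne_of_gt hν0
        have hz : -α + α * ν * f t ^ (-α) + (f t ^ (-α) - 1 / ν) * (-(α * ν)) = 0 := by
          field_simp
          ring
        linarith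
      linarith
    nlinarith [key, hE]
  -- p is antitone on [0, ∞)
  have hanti : AntitoneOn p (Set.Ici 0) := by
    apply antitoneOn_of_deriv_nonpos (convex_Ici 0)
    · intro t ht
      exact (hp t ht).continuousAt.continuousWithinAt
    · intro t ht
      rw [interior_Ici] at ht
      exact ((hp t (le_of_lt ht)).differentiableAt).differentiableWithinAt
    · intro t ht
      rw [interior_Ici] at ht
      exact hderiv_nonpos t ht.le
  -- p 0 < 0
  have hp0 : p 0 < 0 := by
    have : f 0 ^ (-α) - 1 / ν < 0 := by
      have h2 : f 0 ^ (-α) * f 0 ^ α = 1 := by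
        rw [← Real.rpow_add (hpos 0 le_rfl)]; simp
      have h4 : 0 < f 0 ^ (-α) := Real.rpow_pos_of_pos (hpos 0 le_rfl) _
      have h5 : f 0 ^ (-α) * ν < 1 := by nlinarith
      have h6 : f 0 ^ (-α) < 1 / ν := by
        rw [lt_div_iff₀ hν0]; linarith
      linarith
    simp only [hp_def, mul_zero, neg_zero, Real.exp_zero, mul_one]
    exact this
  -- bound: for all t ≥ 0, exp (α ν t) < (1/ν) / (-(p 0))
  set C : ℝ := (1 / ν) / (-(p 0)) with hC_def
  have hbound : ∀ t, 0 ≤ t → Real.exp (α * ν * t) < C := by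
    intro t ht
    have hpt : p t ≤ p 0 := hanti Set.self_mem_Ici ht ht
    have h4 : 0 < f t ^ (-α) := Real.rpow_pos_of_pos (hpos t ht) _
    have hE : 0 < Real.exp (-(α * ν) * t) := Real.exp_pos _
    -- (g t - 1/ν) * E ≤ p 0 and g t - 1/ν > -1/ν
    have h5 : (-(1 / ν)) * Real.exp (-(α * ν) * t) < p 0 := by
      calc (-(1 / ν)) * Real.exp (-(α * ν) * t)
          < (f t ^ (-α) - 1 / ν) * Real.exp (-(α * ν) * t) := by
            apply mul_lt_mul_of_pos_right _ hE
            linarith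
        _ = p t := rfl
        _ ≤ p 0 := hpt
    have hEinv : Real.exp (-(α * ν) * t) = (Real.exp (α * ν * t))⁻¹ := by
      rw [← Real.exp_neg]; ring_nf
    rw [hEinv] at h5
    have hE2 : 0 < Real.exp (α * ν * t) := Real.exp_pos _
    rw [hC_def, lt_div_iff₀ (by linarith : (0:ℝ) < -(p 0))]
    have := mul_lt_mul_of_pos_right h5 hE2
    rw [mul_assoc, inv_mul_cancel₀ (ne_of_gt hE2), mul_one] at this
    linarith
  -- contradiction: exp grows unboundedly
  have hC0 : 0 < C := (Real.exp_pos _).trans (hbound 0 le_rfl)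
  have hαν : 0 < α * ν := mul_pos hα hν0
  have ht0 : (0:ℝ) ≤ C / (α * ν) := div_nonneg hC0.le hαν.le
  have h1 := hbound (C / (α * ν)) ht0
  have h2 : α * ν * (C / (α * ν)) + 1 ≤ Real.exp (α * ν * (C / (α * ν))) :=
    Real.add_one_le_exp _
  rw [mul_div_cancel₀ _ (ne_of_gt hαν)] at h1 h2
  linarith
end

section
/- Let M : [0, ∞) → ℝ be a C² function with M(t) > 0, M'(t) > 0, M''(t) > 0 for all t ≥ 0, M(t) → ∞ and M'(t) → ∞ as t → ∞, and suppose there exists t₀ ≥ 0 and p > 1 such that M(t) M''(t) ≥ p M'(t)² for all t ≥ t₀. Then a contradiction follows; i.e., no such function exists. (Equivalently: if M M'' ≥ p (M')² with p > 1 on [t₀,∞) and M, M' > 0, then M^{1-p} is concave, and since it is positive and tends to 0, M cannot exist globally.) -/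
/-- Levine's concavity argument: no C² function `M` on `[0, ∞)` can satisfy
`M, M', M'' > 0`, `M → ∞`, `M' → ∞`, and `M M'' ≥ p (M')²` with `p > 1` on `[t₀, ∞)`. -/
theorem stmt_1 (M : ℝ → ℝ) (p t₀ : ℝ) (hp : 1 < p) (ht₀ : 0 ≤ t₀)
    (hdiff : ∀ t, 0 ≤ t → HasDerivAt M (deriv M t) t)
    (hdiff2 : ∀ t, 0 ≤ t → HasDerivAt (deriv M) (deriv (deriv M) t) t)
    (hcont2 : ContinuousOn (deriv (deriv M)) (Set.Ici 0))
    (hMpos : ∀ t, 0 ≤ t → 0 < M t)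
    (hM'pos : ∀ t, 0 ≤ t → 0 < deriv M t)
    (hM''pos : ∀ t, 0 ≤ t → 0 < deriv (deriv M) t)
    (hMtop : Filter.Tendsto M Filter.atTop Filter.atTop)
    (hM'top : Filter.Tendsto (deriv M) Filter.atTop Filter.atTop)
    (hineq : ∀ t, t₀ ≤ t → p * (deriv M t) ^ 2 ≤ M t * deriv (deriv M) t) :
    False := by
  set k : ℝ → ℝ := fun t => M t / deriv M t + (p - 1) * t with hk
  have hkderiv : ∀ t, 0 ≤ t → HasDerivAt k
      ((deriv M t * deriv M t - M t * deriv (deriv M) t) / (deriv M t) ^ 2 + (p - 1)) t := by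
    intro t ht
    have h1 := ((hdiff t ht).div (hdiff2 t ht) (hM'pos t ht).ne')
    have h2 : HasDerivAt (fun t : ℝ => (p - 1) * t) (p - 1) t := by
      simpa using (hasDerivAt_id t).const_mul (p - 1)
    exact h1.add h2
  have hanti : AntitoneOn k (Set.Ici t₀) := by
    apply antitoneOn_of_deriv_nonpos (convex_Ici t₀)
    · intro x hx
      exact ((hkderiv x (le_trans ht₀ hx)).differentiableAt.continuousAt).continuousWithinAt
    · intro x hx
      rw [interior_Ici] at hx
      exact ((hkderiv x (le_trans ht₀ (le_of_lt hx))).differentiableAt).differentiableWithinAt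
    · intro x hx
      rw [interior_Ici] at hx
      have hx0 : (0 : ℝ) ≤ x := le_trans ht₀ (le_of_lt hx)
      rw [(hkderiv x hx0).deriv]
      have h1 := hineq x (le_of_lt hx)
      have h2 : (0 : ℝ) < (deriv M x) ^ 2 := pow_pos (hM'pos x hx0) 2
      rw [div_add' _ _ _ h2.ne']
      apply div_nonpos_of_nonpos_of_nonneg _ h2.le
      nlinarith
  set T : ℝ := t₀ + (M t₀ / deriv M t₀ + 1) / (p - 1) with hT
  have hMt₀ : 0 < M t₀ / deriv M t₀ := div_pos (hMpos t₀ ht₀) (hM'pos t₀ ht₀)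
  have hTt₀ : t₀ ≤ T := by
    have h : 0 < (M t₀ / deriv M t₀ + 1) / (p - 1) := div_pos (by linarith) (by linarith)
    rw [hT]; linarith
  have hkT := hanti (Set.self_mem_Ici) hTt₀ hTt₀
  have hT0 : (0 : ℝ) ≤ T := le_trans ht₀ hTt₀
  have hMT : 0 < M T / deriv M T := div_pos (hMpos T hT0) (hM'pos T hT0)
  have hsub : (p - 1) * (T - t₀) = M t₀ / deriv M t₀ + 1 := by
    rw [hT]
    have hp1 : p - 1 ≠ 0 := by linarith
    field_simp
    ring
  simp only [hk] at hkT
  nlinarith [hkT, hMT, hsub]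
end

section
/- Let α > 0, γ > 0, c > 0, and let f : [0, T) → (0, ∞) be C¹ satisfying f'(t) ≥ c e^{αγt} f(t)^{(α+2)/2} for all t ∈ [0, T). Then T ≤ (1/(αγ)) log(1 + (2γ)/(c f(0)^{α/2})). -/
/-- ODE lemma for the blowup time bound (case `γ > 0`): if `f > 0` is C¹ on `[0, T)` and
`f' ≥ c e^{αγt} f^((α+2)/2)` with `c > 0`, then `T ≤ (1/(αγ)) log(1 + 2γ/(c f(0)^{α/2}))`. -/
theorem stmt_3 (T α γ c : ℝ) (hα : 0 < α) (hγ : 0 < γ) (hc : 0 < c) (hT : 0 < T)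
    (f : ℝ → ℝ)
    (hpos : ∀ t ∈ Set.Ico 0 T, 0 < f t)
    (hdiff : ∀ t ∈ Set.Ico 0 T, HasDerivAt f (deriv f t) t)
    (hcont : ContinuousOn (deriv f) (Set.Ico 0 T))
    (hineq : ∀ t ∈ Set.Ico 0 T, c * Real.exp (α * γ * t) * f t ^ ((α + 2) / 2) ≤ deriv f t) :
    T ≤ 1 / (α * γ) * Real.log (1 + 2 * γ / (c * f 0 ^ (α / 2))) := by
  have hαγ : 0 < α * γ := mul_pos hα hγ
  set p : ℝ := -(α / 2) with hp
  set K : ℝ := c / (2 * γ) with hK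
  have hKpos : 0 < K := div_pos hc (by linarith)
  set h : ℝ → ℝ := fun t => f t ^ p + K * Real.exp (α * γ * t) with hh
  -- derivative of h
  have hd : ∀ t ∈ Set.Ico 0 T,
      HasDerivAt h (deriv f t * (p * f t ^ (p - 1)) + K * (Real.exp (α * γ * t) * (α * γ))) t := by
    intro t ht
    have h1 : HasDerivAt (fun t => f t ^ p) (deriv f t * (p * f t ^ (p - 1))) t := by
      have := (hdiff t ht).rpow_const (p := p) (Or.inl (hpos t ht).ne')
      simpa [mul_comm, mul_assoc, mul_left_comm] using this
    have h2 : HasDerivAt (fun t : ℝ => α * γ * t) (α * γ) t := by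
      simpa using (hasDerivAt_id t).const_mul (α * γ)
    exact h1.add ((h2.exp).const_mul K)
  -- deriv h ≤ 0 on Ico 0 T
  have hderiv_nonpos : ∀ t ∈ Set.Ico 0 T, deriv h t ≤ 0 := by
    intro t ht
    have hft := hpos t ht
    rw [(hd t ht).deriv]
    have hpow : f t ^ ((α + 2) / 2) * f t ^ (p - 1) = 1 := by
      rw [← Real.rpow_add hft]
      have : (α + 2) / 2 + (p - 1) = 0 := by rw [hp]; ring
      rw [this, Real.rpow_zero]
    have hkey : deriv f t * (p * f t ^ (p - 1)) ≤
        (c * Real.exp (α * γ * t) * f t ^ ((α + 2) / 2)) * (p * f t ^ (p - 1)) := by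
      have hple : p * f t ^ (p - 1) ≤ 0 := by
        have h1 : (0:ℝ) < f t ^ (p - 1) := Real.rpow_pos_of_pos hft _
        have h2 : p < 0 := by rw [hp]; linarith
        nlinarith [mul_pos (neg_pos.mpr h2) h1]
      exact mul_le_mul_of_nonpos_right (hineq t ht) hple
    have heq : (c * Real.exp (α * γ * t) * f t ^ ((α + 2) / 2)) * (p * f t ^ (p - 1))
        + K * (Real.exp (α * γ * t) * (α * γ)) = 0 := by
      have : (c * Real.exp (α * γ * t) * f t ^ ((α + 2) / 2)) * (p * f t ^ (p - 1))
          = c * Real.exp (α * γ * t) * p * (f t ^ ((α + 2) / 2) * f t ^ (p - 1)) := by ring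
      rw [this, hpow, hK, hp]
      field_simp
      ring
    calc deriv f t * (p * f t ^ (p - 1)) + K * (Real.exp (α * γ * t) * (α * γ))
        ≤ (c * Real.exp (α * γ * t) * f t ^ ((α + 2) / 2)) * (p * f t ^ (p - 1))
          + K * (Real.exp (α * γ * t) * (α * γ)) := by
          exact add_le_add_left hkey _
      _ = 0 := heq
  -- antitone
  have hmono : AntitoneOn h (Set.Ico 0 T) := by
    apply antitoneOn_of_deriv_nonpos (convex_Ico 0 T)
    · intro t ht
      exact (hd t ht).continuousAt.continuousWithinAt
    · intro t ht
      rw [interior_Ico] at ht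
      exact ((hd t (Set.Ioo_subset_Ico_self ht)).differentiableAt).differentiableWithinAt
    · intro t ht
      rw [interior_Ico] at ht
      exact hderiv_nonpos t (Set.Ioo_subset_Ico_self ht)
  have h0mem : (0:ℝ) ∈ Set.Ico 0 T := ⟨le_refl 0, hT⟩
  -- key pointwise bound: every t ∈ [0,T) is < the bound B
  have hclaim : ∀ t ∈ Set.Ico 0 T, t < 1 / (α * γ) * Real.log (1 + 2 * γ / (c * f 0 ^ (α / 2))) := by
    intro t ht
    have hle : h t ≤ h 0 := hmono h0mem ht ht.1
    have hgt : 0 < f t ^ p := Real.rpow_pos_of_pos (hpos t ht) _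
    have hf0 : 0 < f 0 := hpos 0 h0mem
    have hf0p : f 0 ^ p = (f 0 ^ (α / 2))⁻¹ := by
      rw [hp, Real.rpow_neg hf0.le]
    have hexp : K * Real.exp (α * γ * t) < f 0 ^ p + K := by
      have : h 0 = f 0 ^ p + K * Real.exp 0 := by simp [hh]
      simp only [Real.exp_zero, mul_one] at this
      have ht' : h t = f t ^ p + K * Real.exp (α * γ * t) := rfl
      linarith [hle, hgt, this, ht']
    have hf0pow : 0 < f 0 ^ (α / 2) := Real.rpow_pos_of_pos hf0 _
    have hRHS : 1 + 2 * γ / (c * f 0 ^ (α / 2)) = (f 0 ^ p + K) / K := by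
      rw [hf0p, hK]
      field_simp
      ring
    have hexp2 : Real.exp (α * γ * t) < 1 + 2 * γ / (c * f 0 ^ (α / 2)) := by
      rw [hRHS, lt_div_iff₀ hKpos]
      linarith [hexp]
    have hRHSpos : (0:ℝ) < 1 + 2 * γ / (c * f 0 ^ (α / 2)) := by
      positivity
    have hlog : α * γ * t < Real.log (1 + 2 * γ / (c * f 0 ^ (α / 2))) :=
      (Real.lt_log_iff_exp_lt hRHSpos).mpr hexp2
    rw [one_div, inv_mul_eq_div]
    exact (lt_div_iff₀' hαγ).mpr hlog
  by_contra hB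
  push_neg at hB
  set B := 1 / (α * γ) * Real.log (1 + 2 * γ / (c * f 0 ^ (α / 2))) with hBdef
  have hf0 : 0 < f 0 := hpos 0 h0mem
  have hf0pow : 0 < f 0 ^ (α / 2) := Real.rpow_pos_of_pos hf0 _
  have hBpos : 0 < B := by
    apply mul_pos (by positivity)
    apply Real.log_pos
    have : 0 < 2 * γ / (c * f 0 ^ (α / 2)) := by positivity
    linarith
  exact absurd (hclaim B ⟨hBpos.le, hB⟩) (lt_irrefl B)
end

section
/- Let N ≥ 2 and let γ_ε : [0,∞) → [0,∞) be Lipschitz with supp γ_ε ⊂ [ε⁻¹, ∞) and ‖γ_ε'‖_{L^∞} ≤ ε‖γ'‖_{L^∞}. Then for every radially symmetric u ∈ H¹(ℝᴺ) (identified with a function of r = |x|): ‖γ_ε^{1/2} u‖²_{L^∞} ≤ εᴺ ‖γ'‖_{L^∞} ‖u‖²_{L²(ℝᴺ)} + 2 ε^{N-1} ‖u‖_{L²(ℝᴺ)} ‖γ_ε ∂_r u‖_{L²(ℝᴺ)}, where the L² norms are with respect to the measure r^{N-1} dr (up to the surface constant). -/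
open MeasureTheory

/-- Radial Strauss-type estimate (fCLu) in Lemma eOgau: for `g = γ_ε ≥ 0` supported in
`[ε⁻¹, ∞)` with `|g'| ≤ ε C`, and a radial `H¹` function `u` (as a function of `r`), one has
for every `r > 0`:
`g(r)|u(r)|² ≤ εᴺ C ∫₀^∞ |u|² r^{N-1} dr + 2 ε^{N-1} (∫|u|²r^{N-1})^{1/2} (∫ g²|u'|²r^{N-1})^{1/2}`. -/
theorem stmt_16 (N : ℕ) (hN : 2 ≤ N) (ε C : ℝ) (hε : 0 < ε) (hC : 0 ≤ C)
    (g : ℝ → ℝ) (hgnn : ∀ r, 0 ≤ g r) (hgdiff : Differentiable ℝ g)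
    (hg' : ∀ r, |deriv g r| ≤ ε * C)
    (hgsupp : Function.support g ⊆ Set.Ici ε⁻¹)
    (u : ℝ → ℂ) (hu : Differentiable ℝ u)
    (hu2 : IntegrableOn (fun s => ‖u s‖ ^ 2 * s ^ (N - 1)) (Set.Ioi 0))
    (hgu' : IntegrableOn (fun s => g s ^ 2 * ‖deriv u s‖ ^ 2 * s ^ (N - 1)) (Set.Ioi 0))
    (hdecay : Filter.Tendsto (fun r => g r * ‖u r‖ ^ 2) Filter.atTop (nhds 0)) :
    ∀ r : ℝ, 0 < r →
      g r * ‖u r‖ ^ 2 ≤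
        ε ^ N * C * (∫ s in Set.Ioi (0:ℝ), ‖u s‖ ^ 2 * s ^ (N - 1)) +
          2 * ε ^ (N - 1) *
            Real.sqrt (∫ s in Set.Ioi (0:ℝ), ‖u s‖ ^ 2 * s ^ (N - 1)) *
            Real.sqrt (∫ s in Set.Ioi (0:ℝ), g s ^ 2 * ‖deriv u s‖ ^ 2 * s ^ (N - 1)) := by
  intro r hr
  set n := N - 1 with hn
  have hNn : N = n + 1 := by omega
  set Φ' : ℝ → ℝ := fun s =>
    deriv g s * ‖u s‖ ^ 2 + g s * (2 * (inner ℝ (u s) (deriv u s) : ℝ)) with hΦ'def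
  have hder : ∀ s : ℝ, HasDerivAt (fun t => g t * ‖u t‖ ^ 2) (Φ' s) s := fun s =>
    (hgdiff s).hasDerivAt.mul ((hu s).hasDerivAt.norm_sq)
  -- the two L² factors
  set A : ℝ → ℝ := fun s => ‖u s‖ * Real.sqrt (s ^ n) with hAdef
  set B : ℝ → ℝ := fun s => g s * ‖deriv u s‖ * Real.sqrt (s ^ n) with hBdef
  have hAnn : ∀ s, 0 ≤ A s := fun s => mul_nonneg (norm_nonneg _) (Real.sqrt_nonneg _)
  have hBnn : ∀ s, 0 ≤ B s :=
    fun s => mul_nonneg (mul_nonneg (hgnn s) (norm_nonneg _)) (Real.sqrt_nonneg _)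
  have hA2 : ∀ s ∈ Set.Ioi (0:ℝ), A s ^ 2 = ‖u s‖ ^ 2 * s ^ n := by
    intro s hs
    have hs' : (0:ℝ) ≤ s ^ n := pow_nonneg (le_of_lt hs) n
    simp only [hAdef, mul_pow, Real.sq_sqrt hs']
  have hB2 : ∀ s ∈ Set.Ioi (0:ℝ), B s ^ 2 = g s ^ 2 * ‖deriv u s‖ ^ 2 * s ^ n := by
    intro s hs
    have hs' : (0:ℝ) ≤ s ^ n := pow_nonneg (le_of_lt hs) n
    simp only [hBdef, mul_pow, Real.sq_sqrt hs']
  have hAmeas : AEStronglyMeasurable A (volume.restrict (Set.Ioi (0:ℝ))) :=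
    (hu.continuous.norm.mul (Real.continuous_sqrt.comp (continuous_pow n))).aestronglyMeasurable
  have hBmeas : AEStronglyMeasurable B (volume.restrict (Set.Ioi (0:ℝ))) :=
    (((hgdiff.continuous.aestronglyMeasurable).mul
      (stronglyMeasurable_deriv u).aestronglyMeasurable.norm).mul
      (Real.continuous_sqrt.comp (continuous_pow n)).aestronglyMeasurable)
  have hAL2 : MemLp A 2 (volume.restrict (Set.Ioi (0:ℝ))) := by
    refine (memLp_two_iff_integrable_sq hAmeas).2 ?_
    refine hu2.congr ?_
    filter_upwards [ae_restrict_mem measurableSet_Ioi] with s hs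
    exact (hA2 s hs).symm
  have hBL2 : MemLp B 2 (volume.restrict (Set.Ioi (0:ℝ))) := by
    refine (memLp_two_iff_integrable_sq hBmeas).2 ?_
    refine hgu'.congr ?_
    filter_upwards [ae_restrict_mem measurableSet_Ioi] with s hs
    exact (hB2 s hs).symm
  have hABint : IntegrableOn (fun s => A s * B s) (Set.Ioi (0:ℝ)) := by
    have h := hBL2.smul (φ := A) hAL2 (r := 1)
      (hpqr := ⟨by norm_num [ENNReal.inv_two_add_inv_two]⟩)
    rw [memLp_one_iff_integrable] at h
    exact h.congr (by filter_upwards with s; simp [smul_eq_mul])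
  -- the dominating function
  set M : ℝ → ℝ := fun s => ε ^ N * C * (‖u s‖ ^ 2 * s ^ n) + 2 * ε ^ n * (A s * B s)
    with hMdef
  have hMint : IntegrableOn M (Set.Ioi (0:ℝ)) :=
    (hu2.const_mul _).add (hABint.const_mul _)
  have hMnn : ∀ s ∈ Set.Ioi (0:ℝ), 0 ≤ M s := by
    intro s hs
    have hs' : (0:ℝ) < s := hs
    have h1 : (0:ℝ) ≤ ‖u s‖ ^ 2 * s ^ n := mul_nonneg (sq_nonneg _) (pow_nonneg hs'.le n)
    have h2 : (0:ℝ) ≤ A s * B s := mul_nonneg (hAnn s) (hBnn s)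
    have h3 : (0:ℝ) ≤ ε ^ N * C := mul_nonneg (pow_nonneg hε.le N) hC
    have h4 : (0:ℝ) ≤ 2 * ε ^ n := by positivity
    exact add_nonneg (mul_nonneg h3 h1) (mul_nonneg h4 h2)
  -- pointwise bound on the derivative
  have hgzero : ∀ t, t < ε⁻¹ → g t = 0 := by
    intro t ht
    by_contra h
    exact absurd (hgsupp (Function.mem_support.2 h)) (not_le.2 ht)
  have hbound : ∀ s ∈ Set.Ioi (0:ℝ), |Φ' s| ≤ M s := by
    intro s hs
    have hs' : (0:ℝ) < s := hs
    by_cases hcase : s < ε⁻¹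
    · have hg0 : g s = 0 := hgzero s hcase
      have hg'0 : deriv g s = 0 := by
        have hev : g =ᶠ[nhds s] fun _ => (0:ℝ) :=
          Filter.eventuallyEq_of_mem (Iio_mem_nhds hcase) fun t ht => hgzero t ht
        rw [hev.deriv_eq, deriv_const]
      have : Φ' s = 0 := by simp [hΦ'def, hg0, hg'0]
      rw [this, abs_zero]
      exact hMnn s hs
    · push_neg at hcase
      have hεs : 1 ≤ ε * s := by
        calc (1:ℝ) = ε * ε⁻¹ := (mul_inv_cancel₀ hε.ne').symm
        _ ≤ ε * s := mul_le_mul_of_nonneg_left hcase hε.le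
      have hpow : 1 ≤ (ε * s) ^ n := one_le_pow₀ hεs
      have hAB : A s * B s = g s * ‖u s‖ * ‖deriv u s‖ * s ^ n := by
        have hsn : (0:ℝ) ≤ s ^ n := pow_nonneg hs'.le n
        simp only [hAdef, hBdef]
        rw [show ‖u s‖ * Real.sqrt (s ^ n) * (g s * ‖deriv u s‖ * Real.sqrt (s ^ n))
            = g s * ‖u s‖ * ‖deriv u s‖ * (Real.sqrt (s ^ n) * Real.sqrt (s ^ n)) by ring,
          Real.mul_self_sqrt hsn]
      calc |Φ' s| ≤ |deriv g s| * ‖u s‖ ^ 2 + g s * (2 * (‖u s‖ * ‖deriv u s‖)) := by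
            refine (abs_add_le _ _).trans (add_le_add ?_ ?_)
            · rw [abs_mul, abs_of_nonneg (sq_nonneg ‖u s‖)]
            · rw [abs_mul, abs_of_nonneg (hgnn s), abs_mul, Nat.abs_ofNat]
              exact mul_le_mul_of_nonneg_left
                (mul_le_mul_of_nonneg_left (abs_real_inner_le_norm _ _) (by norm_num))
                (hgnn s)
        _ ≤ ε * C * ‖u s‖ ^ 2 + g s * (2 * (‖u s‖ * ‖deriv u s‖)) :=
            add_le_add_left (mul_le_mul_of_nonneg_right (hg' s) (sq_nonneg _)) _
        _ ≤ ε * C * ‖u s‖ ^ 2 * ((ε * s) ^ n)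
              + g s * (2 * (‖u s‖ * ‖deriv u s‖)) * ((ε * s) ^ n) := by
            exact add_le_add
              (le_mul_of_one_le_right
                (mul_nonneg (mul_nonneg hε.le hC) (sq_nonneg _)) hpow)
              (le_mul_of_one_le_right
                (mul_nonneg (hgnn s) (by positivity)) hpow)
        _ = M s := by
            simp only [hMdef]
            rw [hAB, hNn, mul_pow, pow_succ]
            ring
  -- integrability of Φ' on Ioi r
  have hΦ'meas : AEStronglyMeasurable Φ' (volume.restrict (Set.Ioi r)) := by
    have hh : Φ' = deriv (fun t => g t * ‖u t‖ ^ 2) := funext fun s => ((hder s).deriv).symm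
    rw [hh]
    exact (stronglyMeasurable_deriv _).aestronglyMeasurable
  have hsub : Set.Ioi r ⊆ Set.Ioi (0:ℝ) := Set.Ioi_subset_Ioi hr.le
  have hMr : IntegrableOn M (Set.Ioi r) := hMint.mono_set hsub
  have hΦ'int : IntegrableOn Φ' (Set.Ioi r) := by
    refine hMr.mono' hΦ'meas ?_
    filter_upwards [ae_restrict_mem measurableSet_Ioi] with s hs
    simpa [Real.norm_eq_abs] using hbound s (hsub hs)
  have hFTC : ∫ s in Set.Ioi r, Φ' s = 0 - g r * ‖u r‖ ^ 2 :=
    integral_Ioi_of_hasDerivAt_of_tendsto' (fun x _ => hder x) hΦ'int hdecay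
  have key1 : g r * ‖u r‖ ^ 2 = ∫ s in Set.Ioi r, (-Φ' s) := by
    rw [integral_neg, hFTC]; ring
  have key2 : (∫ s in Set.Ioi r, (-Φ' s)) ≤ ∫ s in Set.Ioi r, M s := by
    refine integral_mono_ae hΦ'int.neg hMr ?_
    filter_upwards [ae_restrict_mem measurableSet_Ioi] with s hs
    exact (neg_le_abs _).trans (hbound s (hsub hs))
  have key3 : (∫ s in Set.Ioi r, M s) ≤ ∫ s in Set.Ioi (0:ℝ), M s := by
    refine setIntegral_mono_set hMint ?_ (HasSubset.Subset.eventuallyLE hsub)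
    filter_upwards [ae_restrict_mem measurableSet_Ioi] with s hs using hMnn s hs
  -- Cauchy–Schwarz
  have hCS : (∫ s in Set.Ioi (0:ℝ), A s * B s)
      ≤ Real.sqrt (∫ s in Set.Ioi (0:ℝ), ‖u s‖ ^ 2 * s ^ n)
        * Real.sqrt (∫ s in Set.Ioi (0:ℝ), g s ^ 2 * ‖deriv u s‖ ^ 2 * s ^ n) := by
    have h2 : (ENNReal.ofReal (2:ℝ)) = 2 := by norm_num
    have hH := integral_mul_le_Lp_mul_Lq_of_nonneg
      (Real.holderConjugate_iff.2 ⟨one_lt_two, by norm_num⟩)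
      (Filter.Eventually.of_forall hAnn) (Filter.Eventually.of_forall hBnn)
      (h2 ▸ hAL2) (h2 ▸ hBL2)
    have eA : (∫ s in Set.Ioi (0:ℝ), A s ^ (2:ℝ))
        = ∫ s in Set.Ioi (0:ℝ), ‖u s‖ ^ 2 * s ^ n := by
      refine integral_congr_ae ?_
      filter_upwards [ae_restrict_mem measurableSet_Ioi] with s hs
      rw [show (2:ℝ) = ((2:ℕ):ℝ) by norm_num, Real.rpow_natCast, hA2 s hs]
    have eB : (∫ s in Set.Ioi (0:ℝ), B s ^ (2:ℝ))
        = ∫ s in Set.Ioi (0:ℝ), g s ^ 2 * ‖deriv u s‖ ^ 2 * s ^ n := by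
      refine integral_congr_ae ?_
      filter_upwards [ae_restrict_mem measurableSet_Ioi] with s hs
      rw [show (2:ℝ) = ((2:ℕ):ℝ) by norm_num, Real.rpow_natCast, hB2 s hs]
    rw [eA, eB, ← Real.sqrt_eq_rpow, ← Real.sqrt_eq_rpow] at hH
    exact hH
  have hsplit : (∫ s in Set.Ioi (0:ℝ), M s)
      = ε ^ N * C * (∫ s in Set.Ioi (0:ℝ), ‖u s‖ ^ 2 * s ^ n)
        + 2 * ε ^ n * ∫ s in Set.Ioi (0:ℝ), A s * B s := by
    simp only [hMdef]
    rw [integral_add (hu2.const_mul _) (hABint.const_mul _),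
      integral_const_mul, integral_const_mul]
  calc g r * ‖u r‖ ^ 2 = ∫ s in Set.Ioi r, (-Φ' s) := key1
    _ ≤ ∫ s in Set.Ioi r, M s := key2
    _ ≤ ∫ s in Set.Ioi (0:ℝ), M s := key3
    _ = ε ^ N * C * (∫ s in Set.Ioi (0:ℝ), ‖u s‖ ^ 2 * s ^ n)
        + 2 * ε ^ n * ∫ s in Set.Ioi (0:ℝ), A s * B s := hsplit
    _ ≤ ε ^ N * C * (∫ s in Set.Ioi (0:ℝ), ‖u s‖ ^ 2 * s ^ n)
        + 2 * ε ^ n * (Real.sqrt (∫ s in Set.Ioi (0:ℝ), ‖u s‖ ^ 2 * s ^ n)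
          * Real.sqrt (∫ s in Set.Ioi (0:ℝ), g s ^ 2 * ‖deriv u s‖ ^ 2 * s ^ n)) :=
        add_le_add_right (mul_le_mul_of_nonneg_left hCS (by positivity)) _
    _ = _ := by ring
end
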